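/- Define polynomials E_n(x;q) ∈ ℝ[x] by E_0(x;q) = 1 and E_{n+1}(x;q) = (1+x)·(q·E_n(x;q) + x·(d/dx)E_n(x;q)). Let q ∈ ℝ and n ∈ ℕ. If q ≥ 0, or n ≤ −q, or q is an integer, then E_n(x;q) has only real zeros (or is identically zero). -/

import Mathlib

/-!
Write `θ_q p = q p + x p'`, so that `E_{n+1} = (1 + x) θ_q E_n`. For `x < 0` we have
`θ_q p = -(-x)^(1-q) (d/dx)((-x)^q p)`, so by Rolle's theorem `θ_q p` vanishes strictly between
any two consecutive zeros of `p`, while a zero of `p` of multiplicity `m` is a zero of `θ_q p` of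
multiplicity at least `m - 1`. If `p` has only negative real zeros this accounts for `deg p - 1`
zeros of `θ_q p`. One more comes from an end of the half-line: `(-x)^q p(x)` tends to `0` as
`x → 0⁻` when `q > 0`, and as `x → -∞` when `q + deg p < 0`; when `q + deg p = 0` the degree of
`θ_q p` drops instead. As `deg E_k ≤ k`, and `deg E_k ≤ m` when `q = -m`, induction shows that
`E_n` has only negative real zeros when `q > 0`, `n ≤ -q` or `q ∈ ℤ_{<0}`; and `E_n = 0` for
`q = 0 < n`.
-/

open Polynomial

/-- All complex zeros of `f` are real (holds trivially for `f = 0`). -/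
def AllRootsReal (f : Polynomial ℝ) : Prop := f.roots.card = f.natDegree

/-- `f` is real-rooted: nonzero and all of its complex zeros are real. -/
def RealRooted (f : Polynomial ℝ) : Prop := f ≠ 0 ∧ AllRootsReal f

/-- The polynomials `E_n(x;q)`: `E_0 = 1` and
`E_{n+1}(x;q) = (1+x)(q E_n(x;q) + x E_n'(x;q))`. -/
noncomputable def Epoly (q : ℝ) : ℕ → Polynomial ℝ
  | 0 => 1
  | n + 1 => (1 + X) * (C q * Epoly q n + X * derivative (Epoly q n))

open Set Filter Topology
open scoped Finset

theorem exists_hasDerivAt_eq_zero_of_tendsto_atBot {f f' : ℝ → ℝ} {b l : ℝ}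
    (hfa : Tendsto f atBot (𝓝 l)) (hfb : Tendsto f (𝓝[<] b) (𝓝 l))
    (hff' : ∀ x ∈ Iio b, HasDerivAt f (f' x) x) : ∃ c ∈ Iio b, f' c = 0 := by
  set φ : ℝ → ℝ := fun s => b + Real.log s
  have hφ_lt : ∀ s ∈ Ioo (0 : ℝ) 1, φ s < b := fun s hs => by
    simpa [φ] using Real.log_neg hs.1 hs.2
  have hφ0 : Tendsto φ (𝓝[>] 0) atBot :=
    tendsto_atBot_add_const_left _ b Real.tendsto_log_nhdsGT_zero
  have hφ1 : Tendsto φ (𝓝[<] 1) (𝓝[<] b) := by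
    refine tendsto_nhdsWithin_iff.2 ⟨?_, ?_⟩
    · simpa [φ] using ((Real.continuousAt_log one_ne_zero).const_add b).tendsto.mono_left
        nhdsWithin_le_nhds
    · filter_upwards [Ioo_mem_nhdsLT zero_lt_one] with s hs using hφ_lt s hs
  obtain ⟨s, hs, hs0⟩ := exists_hasDerivAt_eq_zero' zero_lt_one (hfa.comp hφ0) (hfb.comp hφ1)
    fun s hs => (hff' (φ s) (hφ_lt s hs)).comp s ((Real.hasDerivAt_log hs.1.ne').const_add b)
  exact ⟨φ s, hφ_lt s hs, (mul_eq_zero.1 hs0).resolve_right (inv_ne_zero hs.1.ne')⟩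

theorem Finset.card_le_card_sdiff_of_interleaved_of_mem {α : Type*} [LinearOrder α]
    {s t : Finset α} {a : α}
    (h : ∀ x ∈ s, ∀ y ∈ s, x < y → (∀ z ∈ s, z ∉ Set.Ioo x y) → ∃ z ∈ t, x < z ∧ z < y)
    (ha : a ∈ t \ s) (has : ∀ x ∈ s, ∀ y ∈ s, a ∉ Set.Ioo x y) : #s ≤ #(t \ s) := by
  have key := Finset.card_le_sdiff_of_interleaved (s := s) (t := t.erase a)
    fun x hx y hy hxy hs => by
      obtain ⟨z, hz, hxz, hzy⟩ := h x hx y hy hxy hs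
      exact ⟨z, Finset.mem_erase.2 ⟨fun hza => has x hx y hy (hza ▸ ⟨hxz, hzy⟩), hz⟩, hxz, hzy⟩
  rw [Finset.erase_sdiff_comm, Finset.card_erase_of_mem ha] at key
  have := Finset.card_pos.2 ⟨a, ha⟩
  omega

theorem Multiset.card_add_card_le_of_count_le {α : Type*} [DecidableEq α] {A M : Multiset α}
    (hcount : ∀ x ∈ A, A.count x ≤ M.count x + 1) {u : Finset α} (hu : ∀ x ∈ u, x ∈ M)
    (hdisj : Disjoint A.toFinset u) : card A + #u ≤ #A.toFinset + card M :=
  calc card A + #u = ∑ x ∈ A.toFinset, A.count x + ∑ x ∈ u, 1 := by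
        rw [Multiset.toFinset_sum_count_eq, Finset.card_eq_sum_ones]
    _ ≤ ∑ x ∈ A.toFinset, (M.count x + 1) + ∑ x ∈ u, M.count x := by
        gcongr with x hx x hx
        · exact hcount x (Multiset.mem_toFinset.1 hx)
        · exact Multiset.one_le_count_iff_mem.2 (hu x hx)
    _ = #A.toFinset + ∑ x ∈ A.toFinset ∪ u, M.count x := by
        rw [Finset.sum_union hdisj, Finset.sum_add_distrib, Finset.card_eq_sum_ones]; ring
    _ ≤ #A.toFinset + ∑ x ∈ A.toFinset ∪ u ∪ M.toFinset, M.count x := by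
        grw [← Finset.subset_union_left]
    _ = #A.toFinset + card M := by
        rw [Multiset.sum_count_eq_card fun x hx => Finset.mem_union_right _ (by simpa using hx)]

section EulerOp

variable {R : Type*}

noncomputable def eulerOp [CommSemiring R] (q : R) (p : R[X]) : R[X] := C q * p + X * derivative p

theorem coeff_eulerOp [CommSemiring R] (q : R) (p : R[X]) (n : ℕ) :
    (eulerOp q p).coeff n = (q + n) * p.coeff n := by
  rcases n with _ | n
  · simp [eulerOp]
  · simp only [eulerOp, coeff_add, coeff_C_mul, coeff_X_mul, coeff_derivative]
    push_cast
    ring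

theorem eval_zero_eulerOp [CommSemiring R] (q : R) (p : R[X]) :
    (eulerOp q p).eval 0 = q * p.eval 0 := by
  simp [eulerOp]

theorem natDegree_eulerOp_le [CommSemiring R] (q : R) (p : R[X]) :
    (eulerOp q p).natDegree ≤ p.natDegree :=
  natDegree_le_iff_coeff_eq_zero.2 fun n hn => by
    rw [coeff_eulerOp, coeff_eq_zero_of_natDegree_lt hn, mul_zero]

theorem natDegree_eulerOp_le_sub_one [CommSemiring R] {q : R} {p : R[X]} {m : ℕ}
    (hq : q + m = 0) (hp : p.natDegree ≤ m) : (eulerOp q p).natDegree ≤ m - 1 :=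
  natDegree_le_iff_coeff_eq_zero.2 fun n hn => by
    rw [coeff_eulerOp]
    rcases (show m ≤ n by omega).eq_or_lt with rfl | hmn
    · rw [hq, zero_mul]
    · rw [coeff_eq_zero_of_natDegree_lt (hp.trans_lt hmn), mul_zero]

theorem rootMultiplicity_le_rootMultiplicity_eulerOp_add_one [CommRing R] {q : R} {p : R[X]}
    (hg : eulerOp q p ≠ 0) (a : R) :
    p.rootMultiplicity a ≤ (eulerOp q p).rootMultiplicity a + 1 := by
  have hdvd : (X - C a) ^ (p.rootMultiplicity a - 1) ∣ p :=
    (pow_dvd_pow _ (Nat.sub_le _ 1)).trans (p.pow_rootMultiplicity_dvd a)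
  have hdvd' := pow_sub_one_dvd_derivative_of_pow_dvd (p.pow_rootMultiplicity_dvd a)
  have := (le_rootMultiplicity_iff hg).2 ((hdvd.mul_left _).add (hdvd'.mul_left _))
  omega

end EulerOp

noncomputable def weightedEval (q : ℝ) (p : ℝ[X]) (t : ℝ) : ℝ := (-t) ^ q * p.eval t

section WeightedEval

variable {q : ℝ} {p : ℝ[X]}

theorem hasDerivAt_weightedEval (q : ℝ) (p : ℝ[X]) {x : ℝ} (hx : x < 0) :
    HasDerivAt (weightedEval q p) (-((-x) ^ (q - 1) * (eulerOp q p).eval x)) x := by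
  have hx' : 0 < -x := neg_pos.2 hx
  have hpow : HasDerivAt (fun t : ℝ => (-t) ^ q) (q * (-x) ^ (q - 1) * (-1)) x :=
    (Real.hasDerivAt_rpow_const (Or.inl hx'.ne')).comp x (hasDerivAt_neg x)
  refine (hpow.mul (p.hasDerivAt x)).congr_deriv ?_
  rw [show (-x) ^ q = (-x) ^ (q - 1) * (-x) by rw [← Real.rpow_add_one hx'.ne']; ring_nf]
  simp only [eulerOp, eval_add, eval_mul, eval_C, eval_X]
  ring

theorem isRoot_eulerOp_of_deriv_eq_zero {c : ℝ} (hc : c < 0)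
    (h : -((-c) ^ (q - 1) * (eulerOp q p).eval c) = 0) : (eulerOp q p).IsRoot c :=
  (mul_eq_zero.1 (neg_eq_zero.1 h)).resolve_left (Real.rpow_pos_of_pos (neg_pos.2 hc) _).ne'

theorem continuous_weightedEval (hq : 0 ≤ q) (p : ℝ[X]) : Continuous (weightedEval q p) :=
  ((Real.continuous_rpow_const hq).comp continuous_neg).mul p.continuous

theorem tendsto_weightedEval_atBot (hdeg : q + p.natDegree < 0) :
    Tendsto (weightedEval q p) atBot (𝓝 0) := by
  have hdegle : p.degree ≤ ((-X) ^ p.natDegree : ℝ[X]).degree := by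
    simp [degree_le_natDegree]
  have hbig := (Asymptotics.isBigO_refl (fun t : ℝ => (-t) ^ q) atBot).mul
    (isBigO_atBot_of_degree_le p _ hdegle)
  refine hbig.trans_tendsto ?_
  have hlim : Tendsto (fun t : ℝ => (-t) ^ (q + p.natDegree)) atBot (𝓝 0) := by
    simpa [Function.comp_def] using
      (tendsto_rpow_neg_atTop (by linarith : 0 < -(q + p.natDegree))).comp tendsto_neg_atBot_atTop
  refine hlim.congr' ?_
  filter_upwards [eventually_lt_atBot 0] with t ht
  simp [Real.rpow_add (neg_pos.2 ht), Real.rpow_natCast]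

theorem exists_isRoot_eulerOp_Ioo {a b : ℝ} (hab : a < b) (hb : b ≤ 0)
    (hcont : ContinuousOn (weightedEval q p) (Icc a b))
    (heq : weightedEval q p a = weightedEval q p b) : ∃ c ∈ Ioo a b, (eulerOp q p).IsRoot c := by
  obtain ⟨c, hc, hc0⟩ := exists_hasDerivAt_eq_zero hab hcont heq
    fun x hx => hasDerivAt_weightedEval q p (hx.2.trans_le hb)
  exact ⟨c, hc, isRoot_eulerOp_of_deriv_eq_zero (hc.2.trans_le hb) hc0⟩

theorem exists_isRoot_eulerOp_between {x y : ℝ} (hx : p.IsRoot x) (hy : p.IsRoot y)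
    (hxy : x < y) (hy0 : y < 0) : ∃ z ∈ Ioo x y, (eulerOp q p).IsRoot z :=
  exists_isRoot_eulerOp_Ioo hxy hy0.le
    (fun t ht => (hasDerivAt_weightedEval q p (ht.2.trans_lt hy0)).continuousAt.continuousWithinAt)
    (by simp [weightedEval, hx.eq_zero, hy.eq_zero])

theorem exists_isRoot_eulerOp_Ioo_zero (hq : 0 < q) {x : ℝ} (hx : p.IsRoot x) (hx0 : x < 0) :
    ∃ z ∈ Ioo x 0, (eulerOp q p).IsRoot z :=
  exists_isRoot_eulerOp_Ioo hx0 le_rfl (continuous_weightedEval hq.le p).continuousOn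
    (by simp [weightedEval, hx.eq_zero, Real.zero_rpow hq.ne'])

theorem exists_isRoot_eulerOp_lt (hdeg : q + p.natDegree < 0) {x : ℝ} (hx : p.IsRoot x)
    (hx0 : x < 0) : ∃ z < x, (eulerOp q p).IsRoot z := by
  have hleft : Tendsto (weightedEval q p) (𝓝[<] x) (𝓝 0) := by
    simpa [weightedEval, hx.eq_zero] using
      (hasDerivAt_weightedEval q p hx0).continuousAt.tendsto.mono_left nhdsWithin_le_nhds
  obtain ⟨c, hc, hc0⟩ := exists_hasDerivAt_eq_zero_of_tendsto_atBot
    (tendsto_weightedEval_atBot hdeg) hleft fun t ht => hasDerivAt_weightedEval q p (ht.trans hx0)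
  exact ⟨c, hc, isRoot_eulerOp_of_deriv_eq_zero (lt_trans hc hx0) hc0⟩

end WeightedEval

def NegRealRooted (p : ℝ[X]) : Prop := RealRooted p ∧ ∀ x ∈ p.roots, x < 0

noncomputable def negRoots (p : ℝ[X]) : Finset ℝ := (p.roots.filter (· < 0)).toFinset

theorem mem_negRoots {p : ℝ[X]} (hp : p ≠ 0) {x : ℝ} : x ∈ negRoots p ↔ p.IsRoot x ∧ x < 0 := by
  simp [negRoots, mem_roots hp]

namespace NegRealRooted

variable {q : ℝ} {p : ℝ[X]}

theorem eval_zero_ne_zero (hp : NegRealRooted p) : p.eval 0 ≠ 0 := fun h =>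
  lt_irrefl 0 (hp.2 0 ((mem_roots hp.1.1).2 h))

theorem eulerOp_ne_zero (hp : NegRealRooted p) (hq : q ≠ 0) : eulerOp q p ≠ 0 := fun h =>
  mul_ne_zero hq hp.eval_zero_ne_zero (by rw [← eval_zero_eulerOp, h, eval_zero])

theorem eulerOp_of_card_le (hp : NegRealRooted p) (hq : q ≠ 0)
    (hcard : (eulerOp q p).natDegree + #p.roots.toFinset ≤
      p.natDegree + #(negRoots (eulerOp q p) \ p.roots.toFinset)) :
    NegRealRooted (eulerOp q p) := by
  classical
  set g := eulerOp q p
  have hg : g ≠ 0 := hp.eulerOp_ne_zero hq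
  set M := g.roots.filter (· < 0)
  have hcount := Multiset.card_add_card_le_of_count_le (A := p.roots) (M := M)
    (u := negRoots g \ p.roots.toFinset)
    (fun x hx => by
      rw [Multiset.count_filter_of_pos (p := (· < 0)) (hp.2 x hx), count_roots, count_roots]
      exact rootMultiplicity_le_rootMultiplicity_eulerOp_add_one hg x)
    (fun x hx => by simpa [negRoots, M] using (Finset.mem_sdiff.1 hx).1)
    Finset.disjoint_sdiff
  have hM : Multiset.card M ≤ Multiset.card g.roots :=
    Multiset.card_le_card (Multiset.filter_le _ _)
  have hpcard : Multiset.card p.roots = p.natDegree := hp.1.2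
  have hgcard := g.card_roots'
  have hMg : M = g.roots := Multiset.eq_of_le_of_card_le (Multiset.filter_le _ _) (by omega)
  refine ⟨⟨hg, by unfold AllRootsReal; omega⟩, fun x hx => ?_⟩
  rw [← hMg] at hx
  exact (Multiset.mem_filter.1 hx).2

theorem negRoots_eulerOp_interleave (hp : NegRealRooted p) (hq : q ≠ 0) :
    ∀ x ∈ p.roots.toFinset, ∀ y ∈ p.roots.toFinset, x < y →
      (∀ z ∈ p.roots.toFinset, z ∉ Ioo x y) → ∃ z ∈ negRoots (eulerOp q p), x < z ∧ z < y := by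
  intro x hx y hy hxy _
  rw [Multiset.mem_toFinset] at hx hy
  obtain ⟨z, hz, hgz⟩ := exists_isRoot_eulerOp_between (q := q) ((mem_roots hp.1.1).1 hx)
    ((mem_roots hp.1.1).1 hy) hxy (hp.2 y hy)
  exact ⟨z, (mem_negRoots (hp.eulerOp_ne_zero hq)).2 ⟨hgz, hz.2.trans (hp.2 y hy)⟩, hz⟩

theorem card_roots_toFinset_le (hp : NegRealRooted p) (hq : q ≠ 0) :
    #p.roots.toFinset ≤ #(negRoots (eulerOp q p) \ p.roots.toFinset) + 1 :=
  Finset.card_le_sdiff_of_interleaved (hp.negRoots_eulerOp_interleave hq)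

theorem card_roots_toFinset_le_of_pos (hp : NegRealRooted p) (hq : 0 < q) :
    #p.roots.toFinset ≤ #(negRoots (eulerOp q p) \ p.roots.toFinset) := by
  rcases p.roots.toFinset.eq_empty_or_nonempty with hs | hs
  · simp [hs]
  set r := p.roots.toFinset.max' hs
  have hr : r ∈ p.roots := Multiset.mem_toFinset.1 (Finset.max'_mem _ hs)
  obtain ⟨a, ha, hga⟩ := exists_isRoot_eulerOp_Ioo_zero hq ((mem_roots hp.1.1).1 hr) (hp.2 r hr)
  refine Finset.card_le_card_sdiff_of_interleaved_of_mem (hp.negRoots_eulerOp_interleave hq.ne') ?_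
    fun x _ y hy hay => (hay.2.trans_le (Finset.le_max' _ y hy)).not_gt ha.1
  exact Finset.mem_sdiff.2 ⟨(mem_negRoots (hp.eulerOp_ne_zero hq.ne')).2 ⟨hga, ha.2⟩,
    fun has => (Finset.le_max' _ a has).not_gt ha.1⟩

theorem card_roots_toFinset_le_of_add_natDegree_neg (hp : NegRealRooted p)
    (hdeg : q + p.natDegree < 0) :
    #p.roots.toFinset ≤ #(negRoots (eulerOp q p) \ p.roots.toFinset) := by
  have hq : q ≠ 0 := by linarith [(p.natDegree.cast_nonneg : (0 : ℝ) ≤ _)]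
  rcases p.roots.toFinset.eq_empty_or_nonempty with hs | hs
  · simp [hs]
  set r := p.roots.toFinset.min' hs
  have hr : r ∈ p.roots := Multiset.mem_toFinset.1 (Finset.min'_mem _ hs)
  obtain ⟨a, ha, hga⟩ := exists_isRoot_eulerOp_lt hdeg ((mem_roots hp.1.1).1 hr) (hp.2 r hr)
  refine Finset.card_le_card_sdiff_of_interleaved_of_mem (hp.negRoots_eulerOp_interleave hq) ?_
    fun x hx _ _ hax => ((Finset.min'_le _ x hx).trans_lt hax.1).not_gt ha
  exact Finset.mem_sdiff.2 ⟨(mem_negRoots (hp.eulerOp_ne_zero hq)).2 ⟨hga, ha.trans (hp.2 r hr)⟩,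
    fun has => (Finset.min'_le _ a has).not_gt ha⟩

theorem eulerOp_of_pos (hp : NegRealRooted p) (hq : 0 < q) : NegRealRooted (eulerOp q p) := by
  refine hp.eulerOp_of_card_le hq.ne' ?_
  have := natDegree_eulerOp_le q p
  have := hp.card_roots_toFinset_le_of_pos hq
  omega

theorem eulerOp_of_add_natDegree_nonpos (hp : NegRealRooted p) (hq : q < 0)
    (hdeg : q + p.natDegree ≤ 0) : NegRealRooted (eulerOp q p) := by
  refine hp.eulerOp_of_card_le hq.ne ?_
  rcases hdeg.lt_or_eq with hlt | heq
  · have := natDegree_eulerOp_le q p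
    have := hp.card_roots_toFinset_le_of_add_natDegree_neg hlt
    omega
  · have := natDegree_eulerOp_le_sub_one heq le_rfl
    have : p.natDegree ≠ 0 := fun h => by simp [h] at heq; linarith
    have := hp.card_roots_toFinset_le hq.ne
    omega

theorem one_add_X_mul {g : ℝ[X]} (hg : NegRealRooted g) : NegRealRooted ((1 + X) * g) := by
  have hX : (1 + X : ℝ[X]) = X - C (-1) := by rw [map_neg, C_1]; ring
  have hprod : (1 + X) * g ≠ 0 := mul_ne_zero (hX ▸ X_sub_C_ne_zero _) hg.1.1
  have hroots : ((1 + X) * g).roots = (-1 ::ₘ g.roots) := by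
    rw [roots_mul hprod, hX, roots_X_sub_C, Multiset.singleton_add]
  refine ⟨⟨hprod, ?_⟩, ?_⟩
  · rw [AllRootsReal, hroots, Multiset.card_cons, hg.1.2,
      natDegree_mul (hX ▸ X_sub_C_ne_zero _) hg.1.1, hX, natDegree_X_sub_C, add_comm]
  · rw [hroots]
    exact Multiset.forall_mem_cons.2 ⟨by norm_num, hg.2⟩

end NegRealRooted

theorem negRealRooted_one : NegRealRooted 1 :=
  ⟨⟨one_ne_zero, by simp [AllRootsReal]⟩, by simp⟩

theorem Epoly_succ (q : ℝ) (n : ℕ) : Epoly q (n + 1) = (1 + X) * eulerOp q (Epoly q n) := rfl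

theorem natDegree_one_add_X_mul_le (g : ℝ[X]) : ((1 + X) * g).natDegree ≤ g.natDegree + 1 :=
  natDegree_mul_le.trans (by rw [add_comm (1 : ℝ[X]), ← C_1, natDegree_X_add_C, add_comm])

theorem natDegree_Epoly_le (q : ℝ) (n : ℕ) : (Epoly q n).natDegree ≤ n := by
  induction n with
  | zero => simp [Epoly]
  | succ n ih =>
    rw [Epoly_succ]
    exact (natDegree_one_add_X_mul_le _).trans (by grw [natDegree_eulerOp_le, ih])

theorem natDegree_Epoly_le_of_add_eq_zero {q : ℝ} {m : ℕ} (hq : q + m = 0) (hm : 0 < m)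
    (n : ℕ) : (Epoly q n).natDegree ≤ m := by
  induction n with
  | zero => simp [Epoly]
  | succ n ih =>
    rw [Epoly_succ]
    have := natDegree_eulerOp_le_sub_one hq ih
    have := natDegree_one_add_X_mul_le (eulerOp q (Epoly q n))
    omega

theorem Epoly_zero_succ (n : ℕ) : Epoly 0 (n + 1) = 0 := by
  induction n with
  | zero => simp [Epoly]
  | succ n ih => rw [Epoly_succ, ih]; simp [eulerOp]

theorem negRealRooted_Epoly_of_pos {q : ℝ} (hq : 0 < q) (n : ℕ) : NegRealRooted (Epoly q n) := by
  induction n with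
  | zero => exact negRealRooted_one
  | succ n ih => exact (ih.eulerOp_of_pos hq).one_add_X_mul

theorem negRealRooted_Epoly_of_neg {q : ℝ} (hq : q < 0) {n : ℕ}
    (hdeg : ∀ k < n, q + (Epoly q k).natDegree ≤ 0) : NegRealRooted (Epoly q n) := by
  induction n with
  | zero => exact negRealRooted_one
  | succ n ih =>
    exact ((ih fun k hk => hdeg k (by omega)).eulerOp_of_add_natDegree_nonpos hq
      (hdeg n n.lt_succ_self)).one_add_X_mul

/-- Theorem: if `q ≥ 0`, or `n ≤ -q`, or `q` is an integer, then `E_n(x;q)` has only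
real zeros (or is identically zero). -/
theorem stmt14 (q : ℝ) (n : ℕ)
    (h : 0 ≤ q ∨ (n : ℝ) ≤ -q ∨ ∃ m : ℤ, q = (m : ℝ)) :
    AllRootsReal (Epoly q n) := by
  rcases lt_trichotomy q 0 with hq | rfl | hq
  · refine (negRealRooted_Epoly_of_neg hq fun k hk => ?_).1.2
    rcases h with h | h | ⟨m, rfl⟩
    · linarith
    · have : (Epoly q k).natDegree + 1 ≤ n := (natDegree_Epoly_le q k).trans_lt hk
      have : ((Epoly q k).natDegree : ℝ) + 1 ≤ n := by exact_mod_cast this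
      linarith
    · have hm : (m : ℝ) + m.natAbs = 0 := by
        rw [Nat.cast_natAbs, Int.cast_abs, abs_of_neg hq, add_neg_cancel]
      have := natDegree_Epoly_le_of_add_eq_zero hm
        (Int.natAbs_pos.2 (by rintro rfl; simp at hq)) k
      have : ((Epoly m k).natDegree : ℝ) ≤ m.natAbs := by exact_mod_cast this
      linarith
  · cases n with
    | zero => simp [AllRootsReal, Epoly]
    | succ n => simp [AllRootsReal, Epoly_zero_succ]
  · exact (negRealRooted_Epoly_of_pos hq n).1.2
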